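/- Let 0 ≤ q ≤ 1 and let c ∈ ℝ with 0 ≤ 2c < 1 and 4c² ≤ q, and fix φ ∈ ℝ. Consider the covariant circular statistical model p(x | θ) = (1/2π)(1 + 2c·cos(x − θ + φ)) on [0, 2π). Then for every θ the classical Fisher information F(θ) = ∫₀^{2π} (∂_θ p(x|θ))² / p(x|θ) dx equals 1 − √(1 − 4c²), and hence F(θ) ≤ 1 − √(1 − q), with equality if and only if 4c² = q. (This is the qubit case of the theorem that the measurement M∗ maximizes the Fisher information over the set of covariant POVMs, whose outcome amplitudes satisfy 2|C| ≤ √F_Q.) -/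

import Mathlib

noncomputable section

/-- The covariant circular statistical model
`p(x | θ) = (1/2π)(1 + 2c·cos(x − θ + φ))` on `[0, 2π)`. -/
def covDensity (c φ x θ : ℝ) : ℝ := 1 / (2 * Real.pi) * (1 + 2 * c * Real.cos (x - θ + φ))

private lemma hasDerivAt_G (a r : ℝ) (ha0 : 0 ≤ a) (ha1 : a < 1) (hr0 : 0 < r)
    (hr2 : r ^ 2 = 1 - a ^ 2) (u : ℝ) :
    HasDerivAt (fun v => (1 - r) * v - a * Real.sin v
        + 2 * r * Real.arctan (a * Real.sin v / (1 + r + a * Real.cos v)))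
      (a ^ 2 * Real.sin u ^ 2 / (1 + a * Real.cos u)) u := by
  have hcos : ∀ v : ℝ, 1 - a ≤ 1 + a * Real.cos v := by
    intro v
    nlinarith [Real.neg_one_le_cos v, Real.cos_le_one v]
  have hden : (0:ℝ) < 1 + a * Real.cos u := lt_of_lt_of_le (by linarith) (hcos u)
  have hD : (0:ℝ) < 1 + r + a * Real.cos u := by have := hcos u; linarith
  have hN : HasDerivAt (fun v => a * Real.sin v) (a * Real.cos u) u :=
    (Real.hasDerivAt_sin u).const_mul a
  have hDd : HasDerivAt (fun v => 1 + r + a * Real.cos v) (a * (-Real.sin u)) u :=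
    ((Real.hasDerivAt_cos u).const_mul a).const_add (1 + r)
  have hq := hN.div hDd hD.ne'
  have harc := (Real.hasDerivAt_arctan (a * Real.sin u / (1 + r + a * Real.cos u))).comp u hq
  have h1 : HasDerivAt (fun v : ℝ => (1 - r) * v) (1 - r) u := by
    simpa using (hasDerivAt_id u).const_mul (1 - r)
  have h2 : HasDerivAt (fun v => a * Real.sin v) (a * Real.cos u) u := hN
  have htot := (h1.sub h2).add (harc.const_mul (2 * r))
  refine htot.congr_deriv ?_
  symm
  have hs : Real.sin u ^ 2 = 1 - Real.cos u ^ 2 := by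
    nlinarith [Real.sin_sq_add_cos_sq u]
  set s := Real.sin u
  set t := Real.cos u
  have h1ne : (1 + (a * s / (1 + r + a * t)) ^ 2) ≠ 0 := by positivity
  field_simp
  linear_combination (a ^ 2*r + a ^ 2*r ^ 2 + 2*a ^ 3*t + a ^ 3*r*t + a ^ 4 + a ^ 4*t ^ 2 + a ^ 4*s ^ 2) * hs + (1 + r + 2*a*t + a*r*t + a ^ 2) * hr2

/-- for `0 ≤ 2c < 1`, `4c² ≤ q ≤ 1`, the classical Fisher information of
the covariant circular model equals `1 − √(1 − 4c²)`, hence is at most `1 − √(1 − q)`,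
with equality iff `4c² = q`. -/
theorem covariant_model_fisher_information (q c φ : ℝ) (hq0 : 0 ≤ q) (hq1 : q ≤ 1)
    (hc0 : 0 ≤ 2 * c) (hc1 : 2 * c < 1) (hcq : 4 * c ^ 2 ≤ q) (θ : ℝ) :
    (∫ x in (0 : ℝ)..(2 * Real.pi),
        (deriv (fun t => covDensity c φ x t) θ) ^ 2 / covDensity c φ x θ)
      = 1 - Real.sqrt (1 - 4 * c ^ 2)
    ∧ 1 - Real.sqrt (1 - 4 * c ^ 2) ≤ 1 - Real.sqrt (1 - q)
    ∧ (1 - Real.sqrt (1 - 4 * c ^ 2) = 1 - Real.sqrt (1 - q) ↔ 4 * c ^ 2 = q) := by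
  have hpi : (0:ℝ) < Real.pi := Real.pi_pos
  set a := 2 * c with ha
  have ha2 : a ^ 2 = 4 * c ^ 2 := by rw [ha]; ring
  have h4c : 4 * c ^ 2 < 1 := by nlinarith
  have h4c0 : (0:ℝ) ≤ 1 - 4 * c ^ 2 := by linarith
  set r := Real.sqrt (1 - 4 * c ^ 2) with hrdef
  have hr2 : r ^ 2 = 1 - a ^ 2 := by rw [hrdef, Real.sq_sqrt h4c0, ha2]
  have hr0 : 0 < r := Real.sqrt_pos.mpr (by linarith)
  have hr1 : r ≤ 1 := by nlinarith [hr2, sq_nonneg a]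
  refine ⟨?_, ?_, ?_⟩
  · -- the integral
    have hcos : ∀ v : ℝ, 1 - a ≤ 1 + a * Real.cos v := by
      intro v
      nlinarith [Real.neg_one_le_cos v, Real.cos_le_one v]
    have hdenpos : ∀ v : ℝ, (0:ℝ) < 1 + a * Real.cos v := fun v =>
      lt_of_lt_of_le (by linarith) (hcos v)
    -- the integrand equals f
    set f : ℝ → ℝ := fun x =>
      1 / (2 * Real.pi) * (a ^ 2 * Real.sin (x - θ + φ) ^ 2 / (1 + a * Real.cos (x - θ + φ)))
      with hf
    have hderiv : ∀ x : ℝ, deriv (fun t => covDensity c φ x t) θ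
        = 1 / (2 * Real.pi) * (a * Real.sin (x - θ + φ)) := by
      intro x
      have h0 : HasDerivAt (fun t : ℝ => x - t + φ) (-1) θ := by
        simpa using ((hasDerivAt_id θ).const_sub x).add_const φ
      have h1 : HasDerivAt (fun t : ℝ => Real.cos (x - t + φ))
          (-Real.sin (x - θ + φ) * (-1)) θ :=
        ((Real.hasDerivAt_cos (x - θ + φ)).comp θ h0 :)
      have h2 : HasDerivAt (fun t : ℝ => covDensity c φ x t)
          (1 / (2 * Real.pi) * (2 * c * (-Real.sin (x - θ + φ) * (-1)))) θ := by
        unfold covDensity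
        exact ((h1.const_mul (2 * c)).const_add 1).const_mul (1 / (2 * Real.pi))
      rw [h2.deriv, ha]; ring
    have hinteq : ∀ x : ℝ,
        (deriv (fun t => covDensity c φ x t) θ) ^ 2 / covDensity c φ x θ = f x := by
      intro x
      rw [hderiv x, hf]
      unfold covDensity
      have hd := (hdenpos (x - θ + φ)).ne'
      rw [ha]
      field_simp
    -- the antiderivative
    set F : ℝ → ℝ := fun x => 1 / (2 * Real.pi) *
      ((1 - r) * (x - θ + φ) - a * Real.sin (x - θ + φ)
        + 2 * r * Real.arctan (a * Real.sin (x - θ + φ)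
            / (1 + r + a * Real.cos (x - θ + φ)))) with hF
    have hFderiv : ∀ x : ℝ, HasDerivAt F (f x) x := by
      intro x
      have hu : HasDerivAt (fun x : ℝ => x - θ + φ) 1 x := by
        simpa using ((hasDerivAt_id x).sub_const θ).add_const φ
      have hG := (hasDerivAt_G a r hc0 hc1 hr0 hr2 (x - θ + φ)).comp x hu
      have := hG.const_mul (1 / (2 * Real.pi))
      simpa [hF, hf, mul_comm] using this
    have hcont : Continuous f := by
      rw [hf]
      apply Continuous.mul continuous_const
      apply Continuous.div
      · fun_prop
      · fun_prop
      · intro x; exact (hdenpos (x - θ + φ)).ne'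
    have hint : IntervalIntegrable f MeasureTheory.volume 0 (2 * Real.pi) :=
      hcont.intervalIntegrable 0 (2 * Real.pi)
    have key : (∫ x in (0:ℝ)..(2 * Real.pi), f x) = F (2 * Real.pi) - F 0 :=
      intervalIntegral.integral_eq_sub_of_hasDerivAt (fun x _ => hFderiv x) hint
    calc (∫ x in (0:ℝ)..(2 * Real.pi),
            (deriv (fun t => covDensity c φ x t) θ) ^ 2 / covDensity c φ x θ)
        = ∫ x in (0:ℝ)..(2 * Real.pi), f x := by
          apply intervalIntegral.integral_congr
          intro x _
          exact hinteq x
      _ = F (2 * Real.pi) - F 0 := key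
      _ = 1 - r := by
          rw [hF]
          have e1 : (2 * Real.pi - θ + φ) = (0 - θ + φ) + 2 * Real.pi := by ring
          simp only [e1, Real.sin_add_two_pi, Real.cos_add_two_pi]
          field_simp
          ring
  · -- inequality
    have : Real.sqrt (1 - q) ≤ Real.sqrt (1 - 4 * c ^ 2) :=
      Real.sqrt_le_sqrt (by linarith)
    linarith
  · constructor
    · intro h
      have h' : Real.sqrt (1 - 4 * c ^ 2) = Real.sqrt (1 - q) := by linarith
      have := (Real.sqrt_inj h4c0 (by linarith)).mp h'
      linarith
    · intro h; rw [hrdef, h]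

end
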